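/- arXiv:1703.05640 — 4 statements merged into one kernel-verified Lean document; each statement's English description precedes it below -/
import Mathlib

section
/- Let φ₀ ∈ ℝ be such that m·φ₀ is not an integer multiple of 2π for any nonzero integer m, and let g : ℝ → ℝ be continuous and 2π-periodic. Then for every φ ∈ ℝ, lim_{N→∞} (1/N)·∑_{k=1}^{N} g(φ + k·φ₀) = (1/(2π))·∫_{-π}^{π} g(θ) dθ. -/
/-!
The sample means `f ↦ N⁻¹ ∑_{k=1}^N f (x + k α)` are continuous linear functionals of norm at
most `1` on `C(AddCircle T, ℂ)`, so the set of `f` on which they converge to the Haar mean of `f`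
is a closed subspace. It contains every character `e_n = fourier n`: for `n = 0` both sides
are `1`, and for `n ≠ 0` the sample means are `e_n(x)` times the Cesàro means of `z ^ k` with
`z = e_n(α) ≠ 1` (as `α` has infinite order), which are `O(1/N)`, while the Haar mean of `e_n`
is `0`. The characters span a dense subspace, so the convergence holds for every `f`.
-/

open Filter Finset Topology MeasureTheory

theorem tendsto_inv_mul_sum_Icc_pow {𝕜 : Type*} [RCLike 𝕜] {z : 𝕜} (hz : ‖z‖ ≤ 1)
    (hz1 : z ≠ 1) :
    Tendsto (fun N : ℕ ↦ (N : 𝕜)⁻¹ * ∑ k ∈ Icc 1 N, z ^ k) atTop (𝓝 0) := by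
  refine tendsto_inv_atTop_nhds_zero_nat.zero_mul_isBoundedUnder_le
    (isBoundedUnder_of ⟨2 / ‖z - 1‖, fun N ↦ ?_⟩)
  have hpow : ∀ n : ℕ, ‖z ^ n‖ ≤ 1 := fun n ↦ by simpa using pow_le_one₀ (norm_nonneg z) hz
  have hz1' : 0 < ‖z - 1‖ := norm_pos_iff.mpr (sub_ne_zero.mpr hz1)
  rw [Function.comp_apply, ← Finset.Ico_add_one_right_eq_Icc, geom_sum_Ico hz1 (by omega),
    norm_div, div_le_div_iff_of_pos_right hz1']
  calc ‖z ^ (N + 1) - z ^ 1‖ ≤ 1 + 1 := (norm_sub_le _ _).trans (add_le_add (hpow _) (hpow _))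
    _ = 2 := one_add_one_eq_two

theorem ContinuousLinearMap.tendsto_apply_of_tendsto_on_dense_span {ι 𝕜 E F : Type*}
    [NontriviallyNormedField 𝕜] [SeminormedAddCommGroup E] [NormedSpace 𝕜 E]
    [SeminormedAddCommGroup F] [NormedSpace 𝕜 F] {l : Filter ι} {A : ι → E →L[𝕜] F}
    {L : E →L[𝕜] F} {C : ℝ} (hA : ∀ i, ‖A i‖ ≤ C) {s : Set E}
    (hs : (Submodule.span 𝕜 s).topologicalClosure = ⊤)
    (h : ∀ x ∈ s, Tendsto (fun i ↦ A i x) l (𝓝 (L x))) (x : E) :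
    Tendsto (fun i ↦ A i x) l (𝓝 (L x)) := by
  have hbdd : ∃ C, ∀ i, ‖A i‖ ≤ C := ⟨C, hA⟩
  have hequi : Equicontinuous ((↑) ∘ A) := ((NormedSpace.equicontinuous_TFAE A).out 5 1).mp hbdd
  let S : Submodule 𝕜 E :=
    { carrier := {x | Tendsto (fun i ↦ A i x) l (𝓝 (L x))}
      zero_mem' := by simpa using tendsto_const_nhds
      add_mem' := fun hx hy ↦ by simpa using hx.add hy
      smul_mem' := fun c _ hx ↦ by simpa using hx.const_smul c }
  have hS : IsClosed (S : Set E) := hequi.isClosed_setOfPred_tendsto L.continuous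
  have hspan : (Submodule.span 𝕜 s).topologicalClosure ≤ S :=
    Submodule.topologicalClosure_minimal _ (Submodule.span_le.mpr h) hS
  exact hspan (hs ▸ Submodule.mem_top)

namespace ContinuousMap

variable {X : Type*} [TopologicalSpace X]

noncomputable def sampleMeanCLM (p : ℕ → X) (N : ℕ) : C(X, ℂ) →L[ℂ] ℂ :=
  (N : ℂ)⁻¹ • ∑ k ∈ Icc 1 N, evalCLM ℂ (p k)

theorem sampleMeanCLM_apply (p : ℕ → X) (N : ℕ) (f : C(X, ℂ)) :
    sampleMeanCLM p N f = (N : ℂ)⁻¹ * ∑ k ∈ Icc 1 N, f (p k) := by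
  simp [sampleMeanCLM]

theorem norm_sampleMeanCLM_le [CompactSpace X] (p : ℕ → X) (N : ℕ) :
    ‖sampleMeanCLM p N‖ ≤ 1 := by
  refine ContinuousLinearMap.opNorm_le_bound _ zero_le_one fun f ↦ ?_
  rw [sampleMeanCLM_apply, norm_mul, norm_inv, Complex.norm_natCast, one_mul]
  rcases N.eq_zero_or_pos with rfl | hN
  · simp
  calc (N : ℝ)⁻¹ * ‖∑ k ∈ Icc 1 N, f (p k)‖ ≤ (N : ℝ)⁻¹ * (N * ‖f‖) := by
        gcongr
        simpa using norm_sum_le_of_le (Icc 1 N) fun k _ ↦ f.norm_coe_le_norm (p k)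
    _ = ‖f‖ := by field_simp

variable [MeasurableSpace X] [BorelSpace X] [CompactSpace X]

noncomputable def integralCLM (μ : Measure X) [IsFiniteMeasure μ] : C(X, ℂ) →L[ℂ] ℂ :=
  (L1.integralCLM' ℂ).comp (toLp 1 μ ℂ)

theorem integralCLM_apply (μ : Measure X) [IsFiniteMeasure μ] (f : C(X, ℂ)) :
    integralCLM μ f = ∫ x, f x ∂μ := by
  rw [integralCLM, ContinuousLinearMap.comp_apply, ← L1.integral_eq', L1.integral_eq_integral]
  exact integral_congr_ae (coeFn_toLp (p := 1) (𝕜 := ℂ) μ f)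

end ContinuousMap

open ContinuousMap

namespace AddCircle

theorem addOrderOf_coe_eq_zero {p a : ℝ}
    (h : ∀ m : ℤ, m ≠ 0 → ¬∃ k : ℤ, (m : ℝ) * a = k * p) : addOrderOf (a : AddCircle p) = 0 := by
  refine addOrderOf_eq_zero_iff'.mpr fun n hn hna ↦ ?_
  rw [← coe_nsmul, coe_eq_zero_iff] at hna
  obtain ⟨k, hk⟩ := hna
  exact h n (by exact_mod_cast hn.ne') ⟨k, by simpa [eq_comm] using hk⟩

variable {T : ℝ}

theorem fourier_add_nsmul (n : ℤ) (x α : AddCircle T) (k : ℕ) :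
    fourier n (x + k • α) = fourier n x * fourier n α ^ k := by
  simp only [fourier_apply, smul_add, smul_comm n k, toCircle_add, toCircle_nsmul,
    Circle.coe_mul, Circle.coe_pow]

variable [hT : Fact (0 < T)]

theorem fourier_ne_one_of_addOrderOf_eq_zero {α : AddCircle T} (hα : addOrderOf α = 0) {n : ℤ}
    (hn : n ≠ 0) : fourier n α ≠ 1 := by
  rw [fourier_apply, Ne, Circle.coe_eq_one, ← toCircle_zero,
    (injective_toCircle hT.out.ne').eq_iff, ← addOrderOf_dvd_iff_zsmul_eq_zero, hα]
  simpa using hn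

theorem integral_fourier_haarAddCircle {n : ℤ} (hn : n ≠ 0) :
    ∫ x, fourier n x ∂(haarAddCircle (T := T)) = 0 :=
  integral_eq_zero_of_add_right_eq_neg (fourier_add_half_inv_index hn hT.out)

theorem tendsto_sampleMeanCLM_fourier {α : AddCircle T} (hα : addOrderOf α = 0) (x : AddCircle T)
    (n : ℤ) :
    Tendsto (fun N ↦ sampleMeanCLM (fun k ↦ x + k • α) N (fourier n)) atTop
      (𝓝 (integralCLM (haarAddCircle (T := T)) (fourier n))) := by
  simp only [sampleMeanCLM_apply, integralCLM_apply]
  rcases eq_or_ne n 0 with rfl | hn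
  · simp only [fourier_zero, integral_const, probReal_univ, sum_const, Nat.card_Icc,
      add_tsub_cancel_right, nsmul_eq_mul, mul_one, one_smul]
    refine tendsto_const_nhds.congr' ((eventually_ne_atTop 0).mono fun N hN ↦ ?_)
    field_simp
  · simp only [fourier_add_nsmul, ← mul_sum, integral_fourier_haarAddCircle hn]
    have hz := fourier_ne_one_of_addOrderOf_eq_zero hα hn
    simpa [mul_left_comm] using
      (tendsto_inv_mul_sum_Icc_pow (Circle.norm_coe _).le hz).const_mul (fourier n x)

theorem tendsto_inv_mul_sum_Icc_nsmul {α : AddCircle T} (hα : addOrderOf α = 0) (x : AddCircle T)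
    (f : C(AddCircle T, ℂ)) :
    Tendsto (fun N : ℕ ↦ (N : ℂ)⁻¹ * ∑ k ∈ Icc 1 N, f (x + k • α)) atTop
      (𝓝 (∫ y, f y ∂(haarAddCircle (T := T)))) := by
  have := ContinuousLinearMap.tendsto_apply_of_tendsto_on_dense_span
    (fun N ↦ norm_sampleMeanCLM_le _ N) span_fourier_closure_eq_top
    (by rintro _ ⟨n, rfl⟩; exact tendsto_sampleMeanCLM_fourier hα x n) f
  simpa [sampleMeanCLM_apply, integralCLM_apply] using this

end AddCircle

theorem Function.Periodic.tendsto_inv_mul_sum_Icc {T a : ℝ} (hT : 0 < T)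
    (ha : ∀ m : ℤ, m ≠ 0 → ¬∃ k : ℤ, (m : ℝ) * a = k * T) {g : ℝ → ℝ} (hg : Continuous g)
    (hper : Periodic g T) (x t : ℝ) :
    Tendsto (fun N : ℕ ↦ (N : ℝ)⁻¹ * ∑ k ∈ Icc 1 N, g (x + k * a)) atTop
      (𝓝 (T⁻¹ * ∫ θ in t..t + T, g θ)) := by
  have : Fact (0 < T) := ⟨hT⟩
  let f : C(AddCircle T, ℂ) :=
    ⟨fun y ↦ hper.lift y, Complex.continuous_ofReal.comp (continuous_coinduced_dom.mpr hg)⟩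
  have hlim := (Complex.continuous_re.tendsto _).comp <|
    AddCircle.tendsto_inv_mul_sum_Icc_nsmul (AddCircle.addOrderOf_coe_eq_zero ha) x f
  have hf : ∀ y : ℝ, f y = g y := fun y ↦ congrArg Complex.ofReal (hper.lift_coe y)
  have hf_orbit (k : ℕ) : f (x + k • (a : AddCircle T)) = g (x + k * a) := by
    rw [← AddCircle.coe_nsmul, ← AddCircle.coe_add, hf, nsmul_eq_mul]
  convert hlim using 2 with N
  · simp only [Function.comp_apply, hf_orbit, ← Complex.ofReal_natCast, ← Complex.ofReal_sum,
      ← Complex.ofReal_inv, ← Complex.ofReal_mul, Complex.ofReal_re]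
  · have hint : ∫ θ in t..t + T, g θ = ∫ y, hper.lift y := by
      simp only [← AddCircle.intervalIntegral_preimage T t, hper.lift_coe]
    rw [hint, AddCircle.integral_haarAddCircle]
    simp only [f, ContinuousMap.coe_mk, integral_complex_ofReal, Complex.real_smul,
      ← Complex.ofReal_mul, Complex.ofReal_re]

theorem stmt_2 (φ₀ : ℝ)
    (hirr : ∀ m : ℤ, m ≠ 0 → ¬∃ k : ℤ, (m : ℝ) * φ₀ = (k : ℝ) * (2 * Real.pi))
    (g : ℝ → ℝ) (hg : Continuous g) (hper : Function.Periodic g (2 * Real.pi)) :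
    ∀ φ : ℝ,
      Tendsto (fun N : ℕ => (1 / (N : ℝ)) * ∑ k ∈ Finset.Icc 1 N, g (φ + (k : ℝ) * φ₀))
        atTop (nhds ((1 / (2 * Real.pi)) * ∫ θ in (-Real.pi)..Real.pi, g θ)) := by
  intro φ
  have h := hper.tendsto_inv_mul_sum_Icc (by positivity) hirr hg φ (-Real.pi)
  rw [show -Real.pi + 2 * Real.pi = Real.pi by ring] at h
  simpa only [one_div] using h
end

section
/- The set S' ⊆ ℝ² whose boundary contains the curve {(ν, arccos(ν)/π) : ν ∈ [1/2, 1]} is not a basic closed semi-algebraic set; i.e., there do not exist finitely many polynomials G₁,…,G_u ∈ ℝ[X,Y] with S' = {s : G_i(s) ≥ 0 ∀i} and with boundary of S' containing that curve. -/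
/-!
Every boundary point of `{s | ∀ i, 0 ≤ G i s}` is a zero of some nonzero `G i`, so the product
`g` of the nonzero `G i` would vanish on the curve `(ν, arccos ν / π)`, `ν ∈ [1/2, 1]`. Then the
analytic function `t ↦ g (cos (π t), t)` vanishes on `[0, 1/3]`, hence on all of `ℝ`. By
periodicity each vertical line `x = c` with `|c| ≤ 1` then carries infinitely many zeros of `g`,
so `g` vanishes on the strip `[-1, 1] × ℝ` and is therefore the zero polynomial.
-/

open MvPolynomial Set

theorem frontier_iInter_subset_iUnion_frontier {X ι : Type*} [TopologicalSpace X] [Finite ι]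
    (A : ι → Set X) : frontier (⋂ i, A i) ⊆ ⋃ i, frontier (A i) := by
  rintro x ⟨hcl, hint⟩
  rw [interior_iInter_of_finite, mem_iInter, not_forall] at hint
  obtain ⟨i, hi⟩ := hint
  exact mem_iUnion.2 ⟨i, closure_mono (iInter_subset A i) hcl, hi⟩

namespace MvPolynomial

variable {σ : Type*}

theorem ne_zero_and_eval_eq_zero_of_mem_frontier {p : MvPolynomial σ ℝ} {s : σ → ℝ}
    (hs : s ∈ frontier {x | 0 ≤ eval x p}) : p ≠ 0 ∧ eval s p = 0 := by
  refine ⟨?_, (frontier_le_subset_eq continuous_const (continuous_eval p) hs).symm⟩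
  rintro rfl
  simp at hs

theorem exists_ne_zero_and_eval_eq_zero_of_mem_frontier {ι : Type*} [Finite ι]
    {G : ι → MvPolynomial σ ℝ} {s : σ → ℝ} (hs : s ∈ frontier {x | ∀ i, 0 ≤ eval x (G i)}) :
    ∃ i, G i ≠ 0 ∧ eval s (G i) = 0 := by
  rw [ofPred_forall] at hs
  obtain ⟨i, hi⟩ := mem_iUnion.1 (frontier_iInter_subset_iUnion_frontier _ hs)
  exact ⟨i, ne_zero_and_eval_eq_zero_of_mem_frontier hi⟩

theorem eval_polynomial_eval_eq_zero_of_infinite {R : Type*} [CommRing R] [IsDomain R]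
    (p : MvPolynomial σ R) (v : σ → Polynomial R)
    (h : {t | eval (fun i ↦ (v i).eval t) p = 0}.Infinite) (t : R) :
    eval (fun i ↦ (v i).eval t) p = 0 := by
  have heval : ∀ t, (aeval v p).eval t = eval (fun i ↦ (v i).eval t) p := fun t ↦ by
    rw [← Polynomial.coe_aeval_eq_eval, comp_aeval_apply, aeval_eq_eval]
  have hq : aeval v p = 0 :=
    Polynomial.eq_zero_of_infinite_isRoot _ (by simpa only [Polynomial.IsRoot, heval] using h)
  rw [← heval, hq, Polynomial.eval_zero]

end MvPolynomial

open Real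

theorem analyticOnNhd_eval_cos_pi_mul (g : MvPolynomial (Fin 2) ℝ) :
    AnalyticOnNhd ℝ (fun t ↦ eval ![cos (π * t), t] g) univ := by
  refine AnalyticOnNhd.aeval_mvPolynomial (fun i ↦ ?_) g
  fin_cases i
  · exact fun t _ ↦ analyticAt_cos.comp (by fun_prop)
  · exact analyticOnNhd_id

theorem eval_cos_pi_mul_eq_zero_of_eval_arccos_eq_zero {g : MvPolynomial (Fin 2) ℝ}
    (h : ∀ ν ∈ Icc (1 / 2 : ℝ) 1, eval ![ν, arccos ν / π] g = 0) (t : ℝ) :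
    eval ![cos (π * t), t] g = 0 := by
  have hlocal : ∀ t ∈ Icc (0 : ℝ) (1 / 3), eval ![cos (π * t), t] g = 0 := by
    rintro t ⟨ht0, ht1⟩
    have hθ0 : 0 ≤ π * t := by positivity
    have hθ1 : π * t ≤ π / 3 := by nlinarith [pi_pos]
    have hν : cos (π * t) ∈ Icc (1 / 2 : ℝ) 1 := by
      refine ⟨?_, cos_le_one _⟩
      rw [← cos_pi_div_three]
      exact cos_le_cos_of_nonneg_of_le_pi hθ0 (by linarith [pi_pos]) hθ1
    -- on `[0, 1/3]` the curve is the graph `ν = cos (π t)`, `t = arccos ν / π`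
    simpa [arccos_cos hθ0 (by linarith [pi_pos]), pi_ne_zero] using h _ hν
  exact (analyticOnNhd_eval_cos_pi_mul g).eqOn_zero_of_preconnected_of_eventuallyEq_zero
    isPreconnected_univ (mem_univ (1 / 6)) (Filter.eventually_of_mem
      (Icc_mem_nhds (by norm_num) (by norm_num)) hlocal) (mem_univ t)

-- The line `x = c` meets the curve `t ↦ (cos (π t), t)` at the points `t = arccos c / π + 2 n`.
theorem eval_eq_zero_of_forall_eval_cos_pi_mul_eq_zero {g : MvPolynomial (Fin 2) ℝ}
    (h : ∀ t, eval ![cos (π * t), t] g = 0) {c : ℝ} (hc : c ∈ Icc (-1) 1) (t : ℝ) :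
    eval ![c, t] g = 0 := by
  have hvec : ∀ t, ![c, t] = fun i ↦ (![Polynomial.C c, Polynomial.X] i).eval t := by
    intro t; ext i; fin_cases i <;> simp
  rw [hvec]
  refine eval_polynomial_eval_eq_zero_of_infinite g _ (infinite_of_injective_forall_mem
    (f := fun n : ℕ ↦ arccos c / π + 2 * n) (fun m n hmn ↦ by simpa using hmn) fun n ↦ ?_) t
  have hcos : cos (π * (arccos c / π + 2 * n)) = c := by
    rw [show π * (arccos c / π + 2 * n) = arccos c + n * (2 * π) by field_simp,
      cos_add_nat_mul_two_pi, cos_arccos hc.1 hc.2]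
  simpa only [mem_ofPred_eq, ← hvec, hcos] using h (arccos c / π + 2 * n)

theorem eq_zero_of_eval_arccos_eq_zero {g : MvPolynomial (Fin 2) ℝ}
    (h : ∀ ν ∈ Icc (1 / 2 : ℝ) 1, eval ![ν, arccos ν / π] g = 0) : g = 0 := by
  refine funext_set ![Icc (-1) 1, univ] (fun i ↦ ?_) fun x hx ↦ ?_
  · fin_cases i
    exacts [Icc_infinite (by norm_num), infinite_univ]
  · have hx' : x = ![x 0, x 1] := by ext i; fin_cases i <;> rfl
    rw [hx', map_zero, eval_eq_zero_of_forall_eval_cos_pi_mul_eq_zero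
      (eval_cos_pi_mul_eq_zero_of_eval_arccos_eq_zero h) (hx 0 trivial)]

theorem stmt_5 :
    ¬∃ (S' : Set (Fin 2 → ℝ)) (u : ℕ) (G : Fin u → MvPolynomial (Fin 2) ℝ),
      S' = {s : Fin 2 → ℝ | ∀ i, 0 ≤ MvPolynomial.eval s (G i)} ∧
      {p : Fin 2 → ℝ | ∃ ν ∈ Set.Icc (1 / 2 : ℝ) 1,
          p = ![ν, Real.arccos ν / Real.pi]} ⊆ frontier S' := by
  classical
  rintro ⟨S', u, G, rfl, hcurve⟩
  have hg : ∏ i with G i ≠ 0, G i ≠ 0 :=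
    Finset.prod_ne_zero_iff.2 fun i hi ↦ (Finset.mem_filter.1 hi).2
  refine hg <| eq_zero_of_eval_arccos_eq_zero fun ν hν ↦ ?_
  obtain ⟨i, hGi, hi⟩ := exists_ne_zero_and_eval_eq_zero_of_mem_frontier (hcurve ⟨ν, hν, rfl⟩)
  rw [map_prod]
  exact Finset.prod_eq_zero (Finset.mem_filter.2 ⟨Finset.mem_univ i, hGi⟩) hi
end

section
/- The curve μ ↦ (ω(μ), η(μ)) := ((μ/π)·√(1 − 1/(25μ²)), arccos(1/(5μ))/π) for μ ∈ [1/5, 2/5] is concave as a graph: writing η as a function of ω along this curve, d²η/dω² ≤ 0. -/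
open Real Set

noncomputable def omegaCurve (μ : ℝ) : ℝ :=
  (μ / Real.pi) * Real.sqrt (1 - 1 / (25 * μ ^ 2))

noncomputable def etaCurve (μ : ℝ) : ℝ :=
  Real.arccos (1 / (5 * μ)) / Real.pi

/-!
Put `c = 1 / (5μ)`, so that `η = arccos c / π` and `5πω = √(1 - c²) / c = tan (arccos c)`.
Hence along the curve `η = arctan (5πω) / π`, and `arctan` is concave on `[0, ∞)`
because its derivative `1 / (1 + x²)` is decreasing there.
-/

theorem Real.concaveOn_arctan_Ici : ConcaveOn ℝ (Ici 0) arctan := by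
  refine AntitoneOn.concaveOn_of_deriv (convex_Ici 0) continuous_arctan.continuousOn
    differentiable_arctan.differentiableOn ?_
  rw [interior_Ici, deriv_arctan]
  intro a ha b _ hab
  have ha : 0 < a := ha
  dsimp only
  gcongr

theorem concaveOn_arctan_const_mul_div {c d : ℝ} (hc : 0 ≤ c) (hd : 0 ≤ d) :
    ConcaveOn ℝ (Ici 0) fun x => arctan (c * x) / d := by
  have hpre : (c • LinearMap.id : ℝ →ₗ[ℝ] ℝ) ⁻¹' Ici 0 ⊇ Ici 0 := fun x (hx : 0 ≤ x) =>
    show 0 ≤ c * x from mul_nonneg hc hx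
  have := (concaveOn_arctan_Ici.comp_linearMap (c • LinearMap.id)).subset hpre (convex_Ici 0)
  simpa [div_eq_inv_mul] using this.smul (inv_nonneg.mpr hd)

theorem five_pi_mul_omegaCurve {μ : ℝ} (hμ : 0 < μ) :
    5 * π * omegaCurve μ = √(1 - (1 / (5 * μ)) ^ 2) / (1 / (5 * μ)) := by
  have : (1 : ℝ) - (1 / (5 * μ)) ^ 2 = 1 - 1 / (25 * μ ^ 2) := by
    field_simp; ring
  rw [this, omegaCurve]
  field_simp [pi_pos.ne']

theorem etaCurve_eq_arctan_omegaCurve {μ : ℝ} (hμ : 0 < μ) :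
    etaCurve μ = arctan (5 * π * omegaCurve μ) / π := by
  rw [etaCurve, five_pi_mul_omegaCurve hμ, arccos_eq_arctan (by positivity)]

theorem omegaCurve_nonneg {μ : ℝ} (hμ : 0 ≤ μ) : 0 ≤ omegaCurve μ := by
  unfold omegaCurve
  have := pi_pos
  positivity

theorem continuousOn_omegaCurve : ContinuousOn omegaCurve (Ioi 0) := by
  unfold omegaCurve
  fun_prop (disch := exact fun μ (hμ : 0 < μ) => by positivity)

theorem stmt_6 :
    ∃ h : ℝ → ℝ,
      (∀ μ ∈ Set.Icc (1 / 5 : ℝ) (2 / 5), h (omegaCurve μ) = etaCurve μ) ∧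
      ConcaveOn ℝ (omegaCurve '' Set.Icc (1 / 5 : ℝ) (2 / 5)) h := by
  have hpos : Icc (1 / 5 : ℝ) (2 / 5) ⊆ Ioi 0 := fun μ hμ => by
    simp only [mem_Ioi]; linarith [hμ.1]
  refine ⟨fun x => arctan (5 * π * x) / π, fun μ hμ => ?_, ?_⟩
  · exact (etaCurve_eq_arctan_omegaCurve (hpos hμ)).symm
  · have himage : omegaCurve '' Icc (1 / 5 : ℝ) (2 / 5) ⊆ Ici 0 := by
      rintro _ ⟨μ, hμ, rfl⟩
      exact omegaCurve_nonneg (hpos hμ).le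
    have hconvex : Convex ℝ (omegaCurve '' Icc (1 / 5 : ℝ) (2 / 5)) :=
      (isPreconnected_Icc.image _ (continuousOn_omegaCurve.mono hpos)).convex
    exact (concaveOn_arctan_const_mul_div (by positivity) pi_pos.le).subset himage hconvex
end

section
/- Let f(z) = Mz + c with M the rotation by φ₀ = arccos(4/5) about the fixed point ĉ = (−1/5, 2/5), and let R = ([−1,0] × [0,1]) ∪ ([0,1] × [0,1]) = [−1,1] × [0,1]. Then a point z ∈ ℝ² satisfies f^j(z) ∈ R for all j ∈ ℤ if and only if ‖z − ĉ‖ ≤ 2/5. -/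
/-!
In the complex coordinate `w = z - ĉ`, the map `f` is multiplication by `u = (4 + 3i) / 5`, a
point of the unit circle that is not a root of unity: `(4 + 3i)^n = 5^n` read modulo the Gaussian
prime `2 + i` says `3^n ≡ 0 (mod 5)`. So the orbit of `w` is dense in the circle of radius `‖w‖`,
and it comes arbitrarily close to the lowest point `-i‖w‖`. The rectangle contains the closed disk
of radius `2/5` about `ĉ` and lies above its lowest point, so the orbit stays in the rectangle
exactly when `‖w‖ ≤ 2/5`.
-/

open Complex Metric Set

theorem Circle.denseRange_zpow {u : Circle} (hu : ¬IsOfFinOrder u) :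
    DenseRange (u ^ · : ℤ → Circle) := by
  have : Fact ((0 : ℝ) < 1) := ⟨one_pos⟩
  let e := AddCircle.homeomorphCircle one_ne_zero
  set a := e.symm u
  have ha : AddCircle.toCircle a = u := by
    rw [← AddCircle.homeomorphCircle_apply one_ne_zero, Homeomorph.apply_symm_apply]
  have hdense : DenseRange (· • a : ℤ → AddCircle (1 : ℝ)) := by
    rw [AddCircle.denseRange_zsmul_iff, addOrderOf_eq_zero_iff, isOfFinAddOrder_iff_nsmul_eq_zero]
    rintro ⟨n, hn, hna⟩
    refine hu (isOfFinOrder_iff_pow_eq_one.2 ⟨n, hn, ?_⟩)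
    rw [← ha, ← AddCircle.toCircle_nsmul, hna, AddCircle.toCircle_zero]
  convert e.surjective.denseRange.comp hdense e.continuous using 2 with j
  simp [e, AddCircle.homeomorphCircle_apply, AddCircle.toCircle_zsmul, ha]

theorem Circle.exists_im_zpow_smul_lt {u : Circle} (hu : ¬IsOfFinOrder u) {w : ℂ} {t : ℝ}
    (ht : t < ‖w‖) : ∃ j : ℤ, (u ^ j • w).im < -t := by
  rcases eq_or_ne w 0 with rfl | hw
  · exact ⟨0, by simpa using ht⟩
  have hw' : 0 < ‖w‖ := norm_pos_iff.2 hw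
  -- `ζ` rotates `w` to the lowest point `-i‖w‖` of its circle.
  let ζ : Circle := ⟨-I * ‖w‖ / w, mem_sphere_zero_iff_norm.2 (by simp [hw])⟩
  have hζ : (ζ : ℂ) * w = -I * ‖w‖ := div_mul_cancel₀ _ hw
  obtain ⟨j, hj⟩ := Metric.denseRange_iff.1 (Circle.denseRange_zpow hu) ζ ((‖w‖ - t) / ‖w‖)
    (div_pos (sub_pos.2 ht) hw')
  change dist (ζ : ℂ) (u ^ j : Circle) < _ at hj
  rw [dist_comm, Complex.dist_eq, lt_div_iff₀ hw'] at hj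
  refine ⟨j, ?_⟩
  calc (u ^ j • w).im = -‖w‖ + (((u ^ j : Circle) - ζ : ℂ) * w).im := by
        rw [Circle.smul_def, smul_eq_mul, sub_mul, hζ]; simp
    _ ≤ -‖w‖ + ‖((u ^ j : Circle) - ζ : ℂ) * w‖ := by gcongr; exact im_le_norm _
    _ < -t := by rw [norm_mul]; linarith

theorem Circle.forall_add_zpow_smul_mem_iff {u : Circle} (hu : ¬IsOfFinOrder u) {S : Set ℂ}
    {p : ℂ} {r : ℝ} (hball : closedBall p r ⊆ S) (hS : S ⊆ im ⁻¹' Ici (p.im - r)) (w : ℂ) :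
    (∀ j : ℤ, p + u ^ j • w ∈ S) ↔ ‖w‖ ≤ r := by
  refine ⟨fun h => ?_, fun hw j => hball ?_⟩
  · by_contra! hr
    obtain ⟨j, hj⟩ := exists_im_zpow_smul_lt hu hr
    have := hS (h j)
    simp only [mem_preimage, mem_Ici, add_im] at this
    linarith
  · rwa [mem_closedBall, dist_eq, add_sub_cancel_left, Circle.norm_smul]

theorem Complex.closedBall_subset_reProdIm (p : ℂ) (r : ℝ) :
    closedBall p r ⊆ Icc (p.re - r) (p.re + r) ×ℂ Icc (p.im - r) (p.im + r) := by
  intro z hz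
  rw [mem_closedBall, dist_eq] at hz
  have hre := (abs_re_le_norm (z - p)).trans hz
  have him := (abs_im_le_norm (z - p)).trans hz
  rw [sub_re, abs_le] at hre
  rw [sub_im, abs_le] at him
  exact ⟨⟨by linarith, by linarith⟩, by linarith, by linarith⟩

theorem eq_zpow_smul_of_forall_add_one {G α : Type*} [Group G] [MulAction G α] {g : G}
    {d : ℤ → α} (h : ∀ j, d (j + 1) = g • d j) (j : ℤ) : d j = g ^ j • d 0 := by
  induction j using Int.induction_on with
  | zero => simp
  | succ j ih => rw [h, ih, smul_smul, ← zpow_one_add, add_comm]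
  | pred j ih =>
    rw [← smul_left_cancel_iff g, ← h, sub_add_cancel, ih, smul_smul, ← zpow_one_add]
    ring_nf

theorem not_isOfFinOrder_four_add_three_I_div_five : ¬IsOfFinOrder ((4 + 3 * I) / 5 : ℂ) := by
  rw [isOfFinOrder_iff_pow_eq_one]
  rintro ⟨n, hn, h⟩
  have hZ : (⟨4, 3⟩ : GaussianInt) ^ n = 5 ^ n := by
    apply GaussianInt.toComplex_injective
    rw [div_pow, div_eq_one_iff_eq (by simp)] at h
    rw [map_pow, map_pow, map_ofNat, GaussianInt.toComplex_def']
    exact_mod_cast h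
  -- Reduce modulo `2 + i`, i.e. send `i ↦ 3` in `ZMod 5`.
  have hmod := congrArg (Zsqrtd.lift ⟨(3 : ZMod 5), by decide⟩) hZ
  rw [map_pow, map_pow, map_ofNat] at hmod
  simp only [Zsqrtd.lift_apply_apply] at hmod
  have h3 : (3 : ZMod 5) ^ n = 0 := by
    rwa [show (5 : ZMod 5) = 0 by decide, zero_pow hn.ne'] at hmod
  have h30 : (3 : ZMod 5) ≠ 0 := by decide
  have : Fact (Nat.Prime 5) := ⟨by norm_num⟩
  exact pow_ne_zero n h30 h3

theorem stmt_8 (M : Matrix (Fin 2) (Fin 2) ℝ) (c cHat : Fin 2 → ℝ)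
    (hM : M = (1 / 5 : ℝ) • !![4, -3; 3, 4]) (hc : c = ![1 / 5, 1 / 5])
    (hcHat : cHat = ![-(1 / 5), 2 / 5])
    (f : (Fin 2 → ℝ) → (Fin 2 → ℝ)) (hf : ∀ z, f z = M.mulVec z + c)
    (R : Set (Fin 2 → ℝ))
    (hR : R = {w : Fin 2 → ℝ | w 0 ∈ Set.Icc (-1 : ℝ) 1 ∧ w 1 ∈ Set.Icc (0 : ℝ) 1})
    (z : Fin 2 → ℝ) (o : ℤ → (Fin 2 → ℝ)) (ho0 : o 0 = z)
    (horbit : ∀ j : ℤ, o (j + 1) = f (o j)) :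
    (∀ j : ℤ, o j ∈ R) ↔
      Real.sqrt ((z 0 - cHat 0) ^ 2 + (z 1 - cHat 1) ^ 2) ≤ 2 / 5 := by
  subst hM hc hcHat hR ho0
  let u : Circle := ⟨(4 + 3 * I) / 5, mem_sphere_zero_iff_norm.2 (by
    rw [norm_div, norm_eq_sqrt_sq_add_sq]; norm_num)⟩
  have hu : ¬IsOfFinOrder u := fun h =>
    not_isOfFinOrder_four_add_three_I_div_five (Circle.coeHom.isOfFinOrder h)
  let p : ℂ := ⟨-(1 / 5), 2 / 5⟩
  let Z : ℤ → ℂ := fun j => ⟨o j 0, o j 1⟩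
  have hstep : ∀ j, Z (j + 1) - p = u • (Z j - p) := by
    intro j
    rw [Circle.smul_def, smul_eq_mul]
    apply Complex.ext <;> simp [Z, p, u, horbit, hf, dotProduct, Fin.sum_univ_two] <;> ring
  have hmem : ∀ j, o j ∈ {w : Fin 2 → ℝ | w 0 ∈ Icc (-1) 1 ∧ w 1 ∈ Icc 0 1} ↔
      p + u ^ j • (Z 0 - p) ∈ Icc (-1) 1 ×ℂ Icc 0 1 := fun j => by
    rw [← eq_zpow_smul_of_forall_add_one (d := (Z · - p)) hstep j, add_sub_cancel]
    rfl
  have hnorm : ‖Z 0 - p‖ =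
      √((o 0 0 - ![-(1 / 5), 2 / 5] 0) ^ 2 + (o 0 1 - ![-(1 / 5), 2 / 5] 1) ^ 2) := by
    simp [norm_eq_sqrt_sq_add_sq, Z, p]
  simp_rw [hmem, ← hnorm]
  refine Circle.forall_add_zpow_smul_mem_iff hu ((closedBall_subset_reProdIm p _).trans ?_) ?_ _
  · rw [reProdIm_subset_iff]
    exact prod_mono (Icc_subset_Icc (by norm_num [p]) (by norm_num [p]))
      (Icc_subset_Icc (by norm_num [p]) (by norm_num [p]))
  · exact fun w hw => by simpa [p] using hw.2.1
end
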